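/- Let the marginal distributions be uniform, F_i = U[a_i, b_i] with 0 ≤ a_i ≤ b_i and b_i > 0 for i = 1,...,n, so that the median of F_i is μ_i = (a_i + b_i)/2. Let μ_max = max_i μ_i and let i be an item attaining this maximum. Then the single pricing p that sets p_i = μ_max for item i and p_j = ∞ for all j ≠ i is 4-max-min optimal: R(p) ≥ R*/4. -/

import Mathlib

open MeasureTheory
open scoped ENNReal NNReal

noncomputable section

/-- A buyer's purchase rule for `n` items: given a valuation profile and a vector of item prices
(in `[0,∞]`), `choose` returns the purchased item (or `none` if nothing is purchased).
The axioms say: a purchased item has a finite price and yields nonnegative utility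
(`feasible`), the purchased item maximizes utility among all items (`optimal`), and the buyer
does purchase whenever some item yields nonnegative utility (`active`). Ties among
utility-maximizing items are broken according to the (fixed) rule embodied by `choose`. -/
structure BuyerRule (n : ℕ) where
  choose : (Fin n → ℝ) → (Fin n → ℝ≥0∞) → Option (Fin n)
  feasible : ∀ v p j, choose v p = some j → p j ≠ ⊤ ∧ (p j).toReal ≤ v j
  optimal : ∀ v p j k, choose v p = some j → p k ≠ ⊤ →
      v k - (p k).toReal ≤ v j - (p j).toReal
  active : ∀ v p, (∃ k, p k ≠ ⊤ ∧ (p k).toReal ≤ v k) → (choose v p).isSome = true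

/-- The seller's revenue from valuation profile `v` under pricing `p`. -/
def BuyerRule.revenue {n : ℕ} (B : BuyerRule n) (p : Fin n → ℝ≥0∞) (v : Fin n → ℝ) : ℝ≥0∞ :=
  (B.choose v p).elim 0 (fun j => p j)

/-- A joint distribution `F` on valuation profiles is compatible with the marginals `marg`
if it is a probability measure whose `j`-th one-dimensional marginal is `marg j` for every `j`. -/
def Compatible {n : ℕ} (marg : Fin n → Measure ℝ) (F : Measure (Fin n → ℝ)) : Prop :=
  IsProbabilityMeasure F ∧ ∀ j, F.map (fun v => v j) = marg j

/-- `R(p,F)`: the expected revenue of pricing `p` under joint distribution `F`. -/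
def expRev {n : ℕ} (B : BuyerRule n) (p : Fin n → ℝ≥0∞) (F : Measure (Fin n → ℝ)) : ℝ≥0∞ :=
  ∫⁻ v, B.revenue p v ∂F

/-- `R(p)`: the robust revenue guarantee of `p`, the infimum of `R(p,F)` over compatible `F`. -/
def robustRev {n : ℕ} (B : BuyerRule n) (marg : Fin n → Measure ℝ) (p : Fin n → ℝ≥0∞) : ℝ≥0∞ :=
  ⨅ (F : Measure (Fin n → ℝ)) (_ : Compatible marg F), expRev B p F

/-- `R*`: the optimal robust revenue guarantee over all pricings. -/
def optRobust {n : ℕ} (B : BuyerRule n) (marg : Fin n → Measure ℝ) : ℝ≥0∞ :=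
  ⨆ p : Fin n → ℝ≥0∞, robustRev B marg p

/-- The uniform distribution on `[a,b]`. -/
def unif (a b : ℝ) : Measure ℝ :=
  (ENNReal.ofReal (b - a))⁻¹ • volume.restrict (Set.Icc a b)

/-!
Every valuation lies below the right endpoint `b_j ≤ a_j + b_j = 2 μ_j ≤ 2 μ_max` of its
support, so no pricing ever collects more than `2 μ_max`, whence `R* ≤ 2 μ_max`. On the other
hand, under any compatible joint distribution the buyer values item `i` at least at its median
`μ_max` with probability `1/2`, and then buys item `i`, the only one on sale, at price `μ_max`;
so `R(p) ≥ μ_max / 2`.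
-/

open Set

section Uniform

variable {a b : ℝ}

lemma unif_Ici_midpoint (h : a < b) : unif a b (Ici ((a + b) / 2)) = 2⁻¹ := by
  have hinter : Ici ((a + b) / 2) ∩ Icc a b = Icc ((a + b) / 2) b := by
    ext x
    simp only [mem_inter_iff, mem_Ici, mem_Icc]
    constructor
    · rintro ⟨h1, -, h3⟩; exact ⟨h1, h3⟩
    · rintro ⟨h1, h2⟩; exact ⟨h1, by linarith, h2⟩
  have hlen : b - (a + b) / 2 = (b - a) * 2⁻¹ := by ring
  simp only [unif, Measure.smul_apply, smul_eq_mul,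
    Measure.restrict_apply measurableSet_Ici, hinter, Real.volume_Icc]
  rw [hlen, ENNReal.ofReal_mul (by linarith), ENNReal.ofReal_inv_of_pos two_pos,
    ENNReal.ofReal_ofNat, ← mul_assoc,
    ENNReal.inv_mul_cancel (by simpa using h) ENNReal.ofReal_ne_top, one_mul]

lemma unif_Ioi_right (a b : ℝ) : unif a b (Ioi b) = 0 := by
  have hinter : Ioi b ∩ Icc a b = ∅ := by
    ext x
    simp only [mem_inter_iff, mem_Ioi, mem_Icc, mem_empty_iff_false, iff_false]
    rintro ⟨h1, -, h2⟩
    linarith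
  simp [unif, Measure.restrict_apply measurableSet_Ioi, hinter]

lemma lt_of_isProbabilityMeasure_unif [IsProbabilityMeasure (unif a b)] : a < b := by
  by_contra! hba
  have hzero : unif a b univ = 0 := by
    simp [unif, Real.volume_Icc, sub_nonpos.mpr hba]
  simp at hzero

end Uniform

namespace Compatible

variable {n : ℕ} {marg : Fin n → Measure ℝ} {F : Measure (Fin n → ℝ)}

lemma measure_preimage_eval (hF : Compatible marg F) (j : Fin n) {s : Set ℝ}
    (hs : MeasurableSet s) : F ((fun v => v j) ⁻¹' s) = marg j s := by
  rw [← Measure.map_apply (measurable_pi_apply j) hs, hF.2 j]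

lemma isProbabilityMeasure_marg (hF : Compatible marg F) (j : Fin n) :
    IsProbabilityMeasure (marg j) := by
  have := hF.1
  rw [← hF.2 j]
  exact Measure.isProbabilityMeasure_map (measurable_pi_apply j).aemeasurable

lemma measure_ge_midpoint_of_unif (hF : Compatible marg F) {j : Fin n} {a b : ℝ}
    (hj : marg j = unif a b) : F {v | (a + b) / 2 ≤ v j} = 2⁻¹ := by
  have := hF.isProbabilityMeasure_marg j
  rw [hj] at this
  change F ((fun v => v j) ⁻¹' Ici ((a + b) / 2)) = 2⁻¹
  rw [hF.measure_preimage_eval j measurableSet_Ici, hj]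
  exact unif_Ici_midpoint lt_of_isProbabilityMeasure_unif

lemma ae_forall_le (hF : Compatible marg F) {c : Fin n → ℝ}
    (hc : ∀ j, marg j (Ioi (c j)) = 0) : ∀ᵐ v ∂F, ∀ j, v j ≤ c j := by
  refine ae_all_iff.mpr fun j => ?_
  rw [ae_iff]
  simpa only [not_le, preimage, mem_Ioi] using
    (hF.measure_preimage_eval j measurableSet_Ioi).trans (hc j)

end Compatible

lemma le_mul_robustRev {n : ℕ} {B : BuyerRule n} {marg : Fin n → Measure ℝ}
    {p : Fin n → ℝ≥0∞} {x c : ℝ≥0∞} (hc₀ : c ≠ 0) (hc : c ≠ ⊤)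
    (h : ∀ F, Compatible marg F → x ≤ c * expRev B p F) : x ≤ c * robustRev B marg p := by
  simp only [robustRev, ENNReal.mul_iInf_of_ne hc₀ hc]
  exact le_iInf₂ h

namespace BuyerRule

variable {n : ℕ} (B : BuyerRule n)

lemma revenue_le_of_forall_le (p : Fin n → ℝ≥0∞) {v : Fin n → ℝ} {c : ℝ}
    (hv : ∀ j, v j ≤ c) : B.revenue p v ≤ ENNReal.ofReal c := by
  unfold revenue
  cases hchoose : B.choose v p with
  | none => exact zero_le
  | some j =>
    obtain ⟨hne, hle⟩ := B.feasible v p j hchoose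
    rw [Option.elim, ← ENNReal.ofReal_toReal hne]
    exact ENNReal.ofReal_le_ofReal (hle.trans (hv j))

variable {p : Fin n → ℝ≥0∞} {i : Fin n} {r : ℝ}

lemma revenue_of_single_price (hr : 0 ≤ r) (hpi : p i = ENNReal.ofReal r)
    (hpj : ∀ j, j ≠ i → p j = ⊤) {v : Fin n → ℝ} (hv : r ≤ v i) :
    B.revenue p v = ENNReal.ofReal r := by
  have hbuys : ∃ k, p k ≠ ⊤ ∧ (p k).toReal ≤ v k :=
    ⟨i, hpi ▸ ENNReal.ofReal_ne_top, by rwa [hpi, ENNReal.toReal_ofReal hr]⟩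
  obtain ⟨j, hj⟩ := Option.isSome_iff_exists.mp (B.active v p hbuys)
  obtain rfl : j = i := by
    by_contra hji
    exact (B.feasible v p j hj).1 (hpj j hji)
  rw [revenue, hj, Option.elim, hpi]

lemma ofReal_mul_measure_le_expRev_of_single_price (hr : 0 ≤ r)
    (hpi : p i = ENNReal.ofReal r) (hpj : ∀ j, j ≠ i → p j = ⊤) (F : Measure (Fin n → ℝ)) :
    ENNReal.ofReal r * F {v | r ≤ v i} ≤ expRev B p F := by
  have hmeas : MeasurableSet {v : Fin n → ℝ | r ≤ v i} :=
    measurableSet_le measurable_const (measurable_pi_apply i)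
  rw [← setLIntegral_const, ← lintegral_indicator hmeas]
  refine lintegral_mono fun v => ?_
  by_cases hv : r ≤ v i
  · rw [indicator_of_mem (show v ∈ {v | r ≤ v i} from hv),
      B.revenue_of_single_price hr hpi hpj hv]
  · rw [indicator_of_notMem (show v ∉ {v | r ≤ v i} from hv)]
    exact zero_le

end BuyerRule

lemma expRev_le_of_ae_forall_le {n : ℕ} (B : BuyerRule n) (q : Fin n → ℝ≥0∞)
    {F : Measure (Fin n → ℝ)} [IsProbabilityMeasure F] {c : ℝ}
    (hF : ∀ᵐ v ∂F, ∀ j, v j ≤ c) : expRev B q F ≤ ENNReal.ofReal c :=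
  calc expRev B q F ≤ ∫⁻ _, ENNReal.ofReal c ∂F :=
        lintegral_mono_ae (hF.mono fun _ hv => B.revenue_le_of_forall_le q hv)
    _ = ENNReal.ofReal c := by simp

theorem uniform_marginals_max_median_single_price_is_four_max_min_optimal_general
    (n : ℕ) (B : BuyerRule n)
    (a b : Fin n → ℝ) (hab : ∀ j, 0 ≤ a j ∧ a j ≤ b j)
    (marg : Fin n → Measure ℝ) (hmarg : ∀ j, marg j = unif (a j) (b j))
    (i : Fin n) (hmax : ∀ j : Fin n, (a j + b j) / 2 ≤ (a i + b i) / 2)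
    (p : Fin n → ℝ≥0∞)
    (hpi : p i = ENNReal.ofReal ((a i + b i) / 2))
    (hpj : ∀ j : Fin n, j ≠ i → p j = ⊤) :
    optRobust B marg ≤ 4 * robustRev B marg p := by
  have hμ : 0 ≤ (a i + b i) / 2 := by linarith [(hab i).1, (hab i).2]
  set μ := (a i + b i) / 2
  refine le_mul_robustRev (by norm_num) (by norm_num) fun F hF => ?_
  have := hF.1
  have hvals : ∀ᵐ v ∂F, ∀ j, v j ≤ 2 * μ :=
    (hF.ae_forall_le fun j => hmarg j ▸ unif_Ioi_right _ _).mono fun v hv j => by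
      linarith [hv j, hmax j, (hab j).1]
  have hupper : optRobust B marg ≤ ENNReal.ofReal (2 * μ) :=
    iSup_le fun q => (iInf₂_le F hF).trans (expRev_le_of_ae_forall_le B q hvals)
  calc optRobust B marg ≤ ENNReal.ofReal (2 * μ) := hupper
    _ = 4 * (ENNReal.ofReal μ * 2⁻¹) := by
      rw [ENNReal.ofReal_mul zero_le_two, ENNReal.ofReal_ofNat, mul_left_comm, mul_comm,
        show (4 : ℝ≥0∞) = 2 * 2 by norm_num, mul_assoc,
        ENNReal.mul_inv_cancel two_ne_zero ENNReal.ofNat_ne_top, mul_one]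
    _ ≤ 4 * expRev B p F := by
      gcongr
      rw [← hF.measure_ge_midpoint_of_unif (hmarg i)]
      exact B.ofReal_mul_measure_le_expRev_of_single_price hμ hpi hpj F

/-- Let the marginals be uniform, `F_j = U[a_j, b_j]` with
`0 ≤ a_j ≤ b_j` and `b_j > 0`, so the median of `F_j` is `μ_j = (a_j + b_j)/2`. Let item `i`
attain the maximal median `μ_max = max_j μ_j`. Then the single pricing `p` with `p i = μ_max`
and `p j = ∞` for `j ≠ i` is `4`-max-min optimal: `R* ≤ 4 · R(p)`. -/
theorem uniform_marginals_max_median_single_price_is_four_max_min_optimal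
    (n : ℕ) (B : BuyerRule n)
    (a b : Fin n → ℝ) (hab : ∀ j, 0 ≤ a j ∧ a j ≤ b j) (hb : ∀ j, 0 < b j)
    (marg : Fin n → Measure ℝ) (hmarg : ∀ j, marg j = unif (a j) (b j))
    (i : Fin n) (hmax : ∀ j : Fin n, (a j + b j) / 2 ≤ (a i + b i) / 2)
    (p : Fin n → ℝ≥0∞)
    (hpi : p i = ENNReal.ofReal ((a i + b i) / 2))
    (hpj : ∀ j : Fin n, j ≠ i → p j = ⊤) :
    optRobust B marg ≤ 4 * robustRev B marg p :=
  uniform_marginals_max_median_single_price_is_four_max_min_optimal_general n B a b hab marg hmarg i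
    hmax p hpi hpj
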